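/- Let L : A* ⇀ B* be a partial function, identified with L : A* → B* + 1. The Kl(T)-automaton 𝒜_fin defined by 𝒜_fin(center) = Irr(A,B); 𝒜_fin(▷) : 1 ⇸ Irr(A,B) sending 0 to (lcp(L), red(L)) if L ≠ ⊥fun and to ⊥ otherwise; 𝒜_fin(a) : Irr(A,B) ⇸ Irr(A,B) sending K to ⊥ if a⁻¹K = ⊥fun and to (lcp(a⁻¹K), red(a⁻¹K)) otherwise; and 𝒜_fin(◁) : Irr(A,B) ⇸ 1 sending K to (K(ε), 0) when K(ε) is defined and to ⊥ otherwise, accepts L_Kl and is a final object of Auto(L_Kl). -/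

import Mathlib

open CategoryTheory CategoryTheory.Limits

universe v u

/-! ### The input category `I_A` of word automata -/

inductive WObj (A : Type) : Type where
  | left | center | right

inductive WEdge {A : Type} : WObj A → WObj A → Type where
  | tri : WEdge WObj.left WObj.center
  | letter (a : A) : WEdge WObj.center WObj.center
  | tril : WEdge WObj.center WObj.right

instance (A : Type) : Quiver (WObj A) := ⟨WEdge⟩

/-- `I_A`: the free category on the graph `left -▷→ center -a→ center -◁→ right`. -/
def IA (A : Type) : Type := Paths (WObj A)

instance (A : Type) : Category (IA A) :=
  inferInstanceAs (Category (Paths (WObj A)))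

def IA.l (A : Type) : IA A := WObj.left
def IA.c (A : Type) : IA A := WObj.center
def IA.r (A : Type) : IA A := WObj.right

/-- The generating morphism `▷ : left ⟶ center`. -/
def IA.tri (A : Type) : IA.l A ⟶ IA.c A := Quiver.Hom.toPath WEdge.tri
/-- The generating morphism `a : center ⟶ center` for a letter `a`. -/
def IA.letter {A : Type} (a : A) : IA.c A ⟶ IA.c A := Quiver.Hom.toPath (WEdge.letter a)
/-- The generating morphism `◁ : center ⟶ right`. -/
def IA.tril (A : Type) : IA.c A ⟶ IA.r A := Quiver.Hom.toPath WEdge.tril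

/-- The word spelled by a path in the graph (the sequence of `letter` edges used). -/
def toWord {A : Type} : ∀ {X Y : WObj A}, Quiver.Path X Y → List A
  | _, _, Quiver.Path.nil => []
  | _, _, Quiver.Path.cons p e =>
      toWord p ++ (match e with
        | WEdge.letter a => [a]
        | _ => [])

/-- The path `center → center` spelling a word `w`. -/
def pathCC {A : Type} : List A → ((IA.c A) ⟶ (IA.c A))
  | [] => Quiver.Path.nil
  | a :: w => (Quiver.Hom.toPath (WEdge.letter a)).comp (pathCC w)

/-- The path `▷ w ◁ : left ⟶ right` spelling a word `w`. -/
def pathLR {A : Type} (w : List A) : (IA.l A) ⟶ (IA.r A) :=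
  IA.tri A ≫ pathCC w ≫ IA.tril A

theorem path_from_right {A : Type} : ∀ {Z : WObj A},
    Quiver.Path (WObj.right : WObj A) Z → Z = WObj.right
  | _, Quiver.Path.nil => rfl
  | _, Quiver.Path.cons p e => by
      have h := path_from_right p
      subst h
      exact nomatch e

theorem path_ll_nil {A : Type} (p : Quiver.Path (WObj.left : WObj A) WObj.left) :
    p = Quiver.Path.nil := by
  cases p with
  | nil => rfl
  | cons q e => exact nomatch e

theorem path_rr_nil {A : Type} (p : Quiver.Path (WObj.right : WObj A) WObj.right) :
    p = Quiver.Path.nil := by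
  cases p with
  | nil => rfl
  | cons q e =>
      have h := path_from_right q
      subst h
      exact nomatch e

theorem path_rl_false {A : Type} (p : Quiver.Path (WObj.right : WObj A) WObj.left) :
    False := by
  have := path_from_right p
  exact nomatch this

/-- `O_A`: the full subcategory of `I_A` on the objects `left` and `right`. -/
def OA (A : Type) : Type := ObjectProperty.FullSubcategory (fun X : IA A => X ≠ IA.c A)

instance (A : Type) : Category (OA A) :=
  inferInstanceAs (Category (ObjectProperty.FullSubcategory (fun X : IA A => X ≠ IA.c A)))

/-- The inclusion functor `ι : O_A ⥤ I_A`. -/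
def OA.inc (A : Type) : OA A ⥤ IA A := ObjectProperty.ι _

def OA.l (A : Type) : OA A := ⟨IA.l A, fun h => by cases h⟩
def OA.r (A : Type) : OA A := ⟨IA.r A, fun h => by cases h⟩

/-- The morphism `▷ w ◁ : left ⟶ right` of `O_A`. -/
def OA.word {A : Type} (w : List A) : OA.l A ⟶ OA.r A := ObjectProperty.homMk (pathLR w)

/-- The language `O_A ⥤ C` determined by two objects `LI`, `LO` of `C` and a function
assigning to every word `w ∈ A*` a morphism `LI ⟶ LO` (the value at `▷w◁`). -/
def mkLang {A : Type} {C : Type u} [Category.{v} C] (LI LO : C)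
    (f : List A → (LI ⟶ LO)) : OA A ⥤ C where
  obj X :=
    match X with
    | ⟨WObj.left, _⟩ => LI
    | ⟨WObj.right, _⟩ => LO
    | ⟨WObj.center, h⟩ => absurd rfl h
  map {X Y} p :=
    match X, Y, p with
    | ⟨WObj.left, _⟩, ⟨WObj.left, _⟩, _ => 𝟙 LI
    | ⟨WObj.left, _⟩, ⟨WObj.right, _⟩, p => f (toWord p.hom)
    | ⟨WObj.right, _⟩, ⟨WObj.right, _⟩, _ => 𝟙 LO
    | ⟨WObj.right, _⟩, ⟨WObj.left, _⟩, p => (path_rl_false p.hom).elim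
    | ⟨WObj.center, h⟩, _, _ => absurd rfl h
    | _, ⟨WObj.center, h⟩, _ => absurd rfl h
  map_id X := by
    rcases X with ⟨(_|_|_), hX⟩
    · rfl
    · exact absurd rfl hX
    · rfl
  map_comp {X Y Z} p q := by
    obtain ⟨p⟩ := p
    obtain ⟨q⟩ := q
    rcases X with ⟨(_|_|_), hX⟩ <;> rcases Y with ⟨(_|_|_), hY⟩ <;>
      rcases Z with ⟨(_|_|_), hZ⟩ <;>
      first
        | exact absurd rfl hX
        | exact absurd rfl hY
        | exact absurd rfl hZ
        | exact (path_rl_false p).elim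
        | exact (path_rl_false q).elim
        | exact (Category.id_comp _).symm
        | (have hp := path_ll_nil p
           subst hp
           show f (toWord (Quiver.Path.comp Quiver.Path.nil q)) = 𝟙 LI ≫ f (toWord q)
           exact (congrArg (fun r => f (toWord r)) (Quiver.Path.nil_comp q)).trans
             (Category.id_comp _).symm)
        | (have hq := path_rr_nil q
           subst hq
           show f (toWord (Quiver.Path.comp p Quiver.Path.nil)) = f (toWord p) ≫ 𝟙 LO
           exact (Category.comp_id _).symm)

/-- A `C`-automaton `M` accepts the `C`-language `L` when `ι ⋙ M = L`. -/
def Accepts {A : Type} {C : Type u} [Category.{v} C] (M : IA A ⥤ C) (L : OA A ⥤ C) : Prop :=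
  OA.inc A ⋙ M = L

/-- The category `Auto(L)` of `C`-automata accepting the language `L`; morphisms are
natural transformations whose whiskering along `ι` is the identity of `L`. -/
def Auto (A : Type) {C : Type u} [Category.{v} C] (L : OA A ⥤ C) : Type _ :=
  { M : IA A ⥤ C // Accepts M L }

instance (A : Type) {C : Type u} [Category.{v} C] (L : OA A ⥤ C) :
    Category (Auto A L) where
  Hom M N := { α : M.1 ⟶ N.1 //
    CategoryTheory.Functor.whiskerLeft (OA.inc A) α = eqToHom (M.2.trans N.2.symm) }
  id M := ⟨𝟙 M.1, by simp⟩
  comp {M N P} f g := ⟨f.1 ≫ g.1, by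
    rw [CategoryTheory.Functor.whiskerLeft_comp, f.2, g.2, eqToHom_trans]⟩
  id_comp f := Subtype.ext (Category.id_comp _)
  comp_id f := Subtype.ext (Category.comp_id _)
  assoc f g h := Subtype.ext (Category.assoc _ _ _)

/-- The functor `St : Auto(L) ⥤ C` evaluating an automaton at the object `center`. -/
def St (A : Type) {C : Type u} [Category.{v} C] (L : OA A ⥤ C) : Auto A L ⥤ C where
  obj M := M.1.obj (IA.c A)
  map f := f.1.app (IA.c A)
  map_id _ := rfl
  map_comp _ _ := rfl

/-- The underlying natural transformation of a morphism in `Auto(L)`. -/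
def Auto.nat {A : Type} {C : Type u} [Category.{v} C] {L : OA A ⥤ C} {M N : Auto A L}
    (α : M ⟶ N) : M.1 ⟶ N.1 :=
  (show { β : M.1 ⟶ N.1 //
      CategoryTheory.Functor.whiskerLeft (OA.inc A) β = eqToHom (M.2.trans N.2.symm) } from α).1

/-- Constructor for objects of `Auto(L)`. -/
def Auto.mk {A : Type} {C : Type u} [Category.{v} C] {L : OA A ⥤ C}
    (M : IA A ⥤ C) (h : Accepts M L) : Auto A L := ⟨M, h⟩

/-! ### The transducer monad `T X = B* × X + 1` and its Kleisli category -/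

/-- The monad `T X = B* × X + 1` (implemented as `Option (List B × X)`,
with `none` playing the role of `⊥ ∈ 1`). -/
def TM (B : Type) (X : Type) : Type := Option (List B × X)

namespace TM

variable {B : Type}

/-- `⊥` : the element of `1` in `T X = B* × X + 1`. -/
def bot {X : Type} : TM B X := (none : Option (List B × X))

/-- `(w, x)` as an element of `T X`. -/
def el {X : Type} (w : List B) (x : X) : TM B X := (some (w, x) : Option (List B × X))

/-- The unit of the monad: `x ↦ (ε, x)`. -/
def unit {X : Type} (x : X) : TM B X := el [] x

/-- The bind operation of the monad, corresponding to the multiplication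
`(w, (u, x)) ↦ (wu, x)`, everything else going to `⊥`. -/
def bindT {X Y : Type} (t : TM B X) (f : X → TM B Y) : TM B Y :=
  Option.bind (t : Option (List B × X)) fun p =>
    Option.map (fun q => (p.1 ++ q.1, q.2)) (f p.2 : Option (List B × Y))

instance : Monad (TM B) where
  pure := unit
  bind := bindT

instance : LawfulMonad (TM B) := by
  apply LawfulMonad.mk' (m := TM B)
  · intro α t
    show bindT t (fun x => unit x) = t
    rcases (t : Option (List B × α)) with _ | ⟨w, x⟩
    · rfl
    · simp [bindT, unit, el]; try rfl
  · intro α β x f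
    show bindT (unit x) f = f x
    rcases hf : (f x : Option (List B × β)) with _ | ⟨u, y⟩ <;>
      (simp [bindT, unit, el, hf]; try rfl)
  · intro α β γ t f g
    show bindT (bindT t f) g = bindT t fun x => bindT (f x) g
    rcases (t : Option (List B × α)) with _ | ⟨w, x⟩
    · rfl
    · rcases hf : (f x : Option (List B × β)) with _ | ⟨u, y⟩
      · simp [bindT, hf]; try rfl
      · rcases hg : (g y : Option (List B × γ)) with _ | ⟨v, z⟩ <;>
          (simp [bindT, hf, hg]; try rfl)

end TM

/-- The Kleisli category `Kl(T)` of the monad `T X = B* × X + 1`. -/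
abbrev KlT (B : Type) := CategoryTheory.KleisliCat (TM B)

/-- The projection `π₁(f) : X → B* + 1` of a Kleisli morphism `f : X ⇸ Y`. -/
def pi1 {B X Y : Type} (f : X → TM B Y) : X → Option (List B) :=
  fun x => Option.map Prod.fst (f x : Option (List B × Y))

/-- The projection `π₂(f) : X → Y + 1` of a Kleisli morphism `f : X ⇸ Y`. -/
def pi2 {B X Y : Type} (f : X → TM B Y) : X → Option Y :=
  fun x => Option.map Prod.snd (f x : Option (List B × Y))

/-- The class `E_Kl` of Kleisli morphisms `e` with `π₂(e)` surjective onto `Y`. -/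
def EKl {B : Type} {X Y : KlT B} (f : X ⟶ Y) : Prop :=
  ∀ y : Y, ∃ x : X, pi2 f x = some y

/-- The class `M_Kl` of Kleisli morphisms `m` with `π₂(m)` injective and `π₁(m)`
constantly `ε`. -/
def MKl {B : Type} {X Y : KlT B} (f : X ⟶ Y) : Prop :=
  Function.Injective (pi2 f) ∧ ∀ x : X, pi1 f x = some ([] : List B)

/-- The `(Kl(T), 1, 1)`-language associated with a partial function `L : A* ⇀ B*`
(represented as `L : A* → Option B*`): it sends `▷w◁` to the Kleisli morphism `1 ⇸ 1`
given by `(L(w), 0)` when `L(w)` is defined and `⊥` otherwise. -/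
def LKl (A B : Type) (L : List A → Option (List B)) : OA A ⥤ KlT B :=
  mkLang (CategoryTheory.KleisliCat.mk (TM B) PUnit) (CategoryTheory.KleisliCat.mk (TM B) PUnit)
    (fun w => fun _ : PUnit => ((L w).map (fun v => (v, PUnit.unit)) : TM B PUnit))

/-! ### Longest common prefixes, reductions and irreducible partial functions -/

/-- The everywhere-undefined partial function `⊥fun : A* ⇀ B*`. -/
def botfun (A B : Type) : List A → Option (List B) := fun _ => none

/-- `w` is a common prefix of all defined values of `K`. -/
def IsCommonPrefix {A B : Type} (w : List B) (K : List A → Option (List B)) : Prop :=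
  ∀ u v, K u = some v → w <+: v

open Classical in
/-- The longest common prefix `lcp(K)` of all defined values of `K` (well defined whenever
`K ≠ ⊥fun`). -/
noncomputable def lcp {A B : Type} (K : List A → Option (List B)) : List B :=
  if h : ∃ w, IsCommonPrefix w K ∧ ∀ w', IsCommonPrefix w' K → w'.length ≤ w.length
  then h.choose else []

/-- The reduction of `K`: `red(K)(u) = v` when `K(u) = lcp(K) · v`, and `⊥` otherwise. -/
noncomputable def red {A B : Type} (K : List A → Option (List B)) :
    List A → Option (List B) :=
  fun u => (K u).map (fun v => v.drop (lcp K).length)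

theorem exists_ne_none_of_ne_botfun {A B : Type} {K : List A → Option (List B)}
    (h : K ≠ botfun A B) : ∃ u v, K u = some v := by
  by_contra hc
  push_neg at hc
  apply h
  funext u
  rcases hK : K u with _ | v
  · rfl
  · exact absurd hK (hc u v)

theorem exists_longest_common_prefix {A B : Type} {K : List A → Option (List B)}
    (h : K ≠ botfun A B) :
    ∃ w, IsCommonPrefix w K ∧ ∀ w', IsCommonPrefix w' K → w'.length ≤ w.length := by
  classical
  obtain ⟨u, v, huv⟩ := exists_ne_none_of_ne_botfun h
  set P : ℕ → Prop := fun n => ∃ w, IsCommonPrefix w K ∧ w.length = n with hP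
  have hbound : ∀ w, IsCommonPrefix w K → w.length ≤ v.length :=
    fun w hw => (hw u v huv).length_le
  have hspec : P (Nat.findGreatest P v.length) :=
    Nat.findGreatest_spec (m := 0) (Nat.zero_le _) ⟨[], fun _ _ _ => List.nil_prefix, rfl⟩
  obtain ⟨w₀, hw₀, hlen⟩ := hspec
  refine ⟨w₀, hw₀, fun w' hw' => ?_⟩
  have := Nat.le_findGreatest (P := P) (hbound w' hw') ⟨w', hw', rfl⟩
  omega

theorem lcp_spec {A B : Type} {K : List A → Option (List B)} (h : K ≠ botfun A B) :
    IsCommonPrefix (lcp K) K ∧ ∀ w, IsCommonPrefix w K → w.length ≤ (lcp K).length := by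
  classical
  have hex := exists_longest_common_prefix h
  rw [lcp, dif_pos hex]
  exact hex.choose_spec

theorem red_ne_botfun {A B : Type} {K : List A → Option (List B)} (h : K ≠ botfun A B) :
    red K ≠ botfun A B := by
  obtain ⟨u, v, huv⟩ := exists_ne_none_of_ne_botfun h
  intro hbad
  have : red K u = none := congrFun hbad u
  simp [red, huv] at this

theorem lcp_red {A B : Type} {K : List A → Option (List B)} (h : K ≠ botfun A B) :
    lcp (red K) = [] := by
  have hrb := red_ne_botfun h
  have hred := lcp_spec hrb
  have hK := lcp_spec h
  have hcommon : IsCommonPrefix (lcp K ++ lcp (red K)) K := by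
    intro u v huv
    obtain ⟨t, ht⟩ := hK.1 u v huv
    have h2 : red K u = some (v.drop (lcp K).length) := by simp [red, huv]
    have hdrop : v.drop (lcp K).length = t := by rw [← ht]; simp
    rw [hdrop] at h2
    obtain ⟨s, hs⟩ := hred.1 u t h2
    exact ⟨s, by rw [List.append_assoc, hs, ht]⟩
  have hle := hK.2 _ hcommon
  rw [List.length_append] at hle
  have : (lcp (red K)).length = 0 := by omega
  exact List.length_eq_zero_iff.mp this

/-- The irreducible partial functions: those `K ≠ ⊥fun` with `lcp(K) = ε`. -/
def Irr (A B : Type) : Type :=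
  { K : List A → Option (List B) // K ≠ botfun A B ∧ lcp K = [] }

/-- For `K ≠ ⊥fun`, the decomposition `(lcp K, red K)`, with `red K` irreducible. -/
noncomputable def toIrr {A B : Type} (K : List A → Option (List B)) (h : K ≠ botfun A B) :
    List B × Irr A B :=
  (lcp K, ⟨red K, red_ne_botfun h, lcp_red h⟩)

attribute [local instance] Classical.propDecidable

/-- The final `Kl(T)`-automaton for a partial function `L : A* ⇀ B*`, defined on the
generating graph: states the irreducible functions `Irr(A,B)`, `▷` sends `0` to
`(lcp L, red L)` (and to `⊥` if `L = ⊥fun`), a letter `a` sends `K` to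
`(lcp (a⁻¹K), red (a⁻¹K))` (and to `⊥` if `a⁻¹K = ⊥fun`), and `◁` sends `K` to
`(K(ε), 0)` when `K(ε)` is defined and to `⊥` otherwise. -/
noncomputable def AfinKlPre (A B : Type) (L : List A → Option (List B)) :
    WObj A ⥤q KlT B where
  obj X :=
    match X with
    | WObj.left => CategoryTheory.KleisliCat.mk (TM B) PUnit
    | WObj.center => CategoryTheory.KleisliCat.mk (TM B) (Irr A B)
    | WObj.right => CategoryTheory.KleisliCat.mk (TM B) PUnit
  map e :=
    match e with
    | WEdge.tri => fun _ : PUnit =>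
        if h : L = botfun A B then (TM.bot : TM B (Irr A B))
        else (some (toIrr L h) : Option (List B × Irr A B))
    | WEdge.letter a => fun K : Irr A B =>
        if h : (fun u => K.1 (a :: u)) = botfun A B then (TM.bot : TM B (Irr A B))
        else (some (toIrr _ h) : Option (List B × Irr A B))
    | WEdge.tril => fun K : Irr A B =>
        ((K.1 []).map (fun v => (v, PUnit.unit)) : TM B PUnit)

/-- The corresponding functor `I_A ⥤ Kl(T)`. -/
noncomputable def AfinKl (A B : Type) (L : List A → Option (List B)) : IA A ⥤ KlT B :=
  Paths.lift (AfinKlPre A B L)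

section Lemmas

variable {A B : Type}

theorem lcp_unique {K : List A → Option (List B)} (h : K ≠ botfun A B)
    {w : List B} (hc : IsCommonPrefix w K)
    (hm : ∀ w', IsCommonPrefix w' K → w'.length ≤ w.length) : lcp K = w := by
  obtain ⟨u, v, huv⟩ := exists_ne_none_of_ne_botfun h
  have hs := lcp_spec h
  have h1 : (lcp K).length ≤ w.length := hm _ hs.1
  have h2 : w.length ≤ (lcp K).length := hs.2 _ hc
  have hp1 : lcp K <+: v := hs.1 u v huv
  have hp2 : w <+: v := hc u v huv
  rcases List.prefix_or_prefix_of_prefix hp1 hp2 with hq | hq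
  · exact hq.eq_of_length (le_antisymm h1 h2)
  · exact (hq.eq_of_length (le_antisymm h2 h1)).symm

theorem mapped_ne_botfun {K : List A → Option (List B)} (h : K ≠ botfun A B)
    (r : List B) : (fun u => (K u).map (r ++ ·)) ≠ botfun A B := by
  obtain ⟨u, v, huv⟩ := exists_ne_none_of_ne_botfun h
  intro hbad
  have := congrFun hbad u
  simp [huv, botfun] at this

theorem lcp_map {K : List A → Option (List B)} (h : K ≠ botfun A B) (r : List B) :
    lcp (fun u => (K u).map (r ++ ·)) = r ++ lcp K := by
  have hs := lcp_spec h
  apply lcp_unique (mapped_ne_botfun h r)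
  · intro u v huv
    simp only [Option.map_eq_some_iff] at huv
    obtain ⟨v0, hv0, rfl⟩ := huv
    obtain ⟨t, rfl⟩ := hs.1 u v0 hv0
    exact ⟨t, by simp⟩
  · intro w' hw'
    obtain ⟨u, v, huv⟩ := exists_ne_none_of_ne_botfun h
    have hp : w' <+: r ++ v := hw' u _ (by simp [huv])
    rcases List.prefix_or_prefix_of_prefix hp (List.prefix_append r v) with hq | hq
    · calc w'.length ≤ r.length := hq.length_le
        _ ≤ _ := by simp
    · obtain ⟨s, rfl⟩ := hq
      have hscomm : IsCommonPrefix s K := by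
        intro u' v' huv'
        have hp' : r ++ s <+: r ++ v' := hw' u' _ (by simp [huv'])
        obtain ⟨t, ht⟩ := hp'
        exact ⟨t, by
          have := ht
          rwa [List.append_assoc, List.append_right_inj] at this⟩
      have := hs.2 s hscomm
      simp only [List.length_append]
      omega

theorem red_map {K : List A → Option (List B)} (h : K ≠ botfun A B) (r : List B) :
    red (fun u => (K u).map (r ++ ·)) = red K := by
  funext u
  simp only [red, lcp_map h r, Option.map_map]
  rcases hK : K u with _ | v
  · rfl
  · simp only [Option.map_some, Function.comp]
    congr 1
    rw [List.length_append, List.drop_append]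
    simp

theorem red_eq_self_of_lcp_nil {K : List A → Option (List B)} (h : lcp K = []) :
    red K = K := by
  funext u
  simp [red, h]

end Lemmas
section Lemmas2

variable {A B : Type}

theorem klComp_apply {X Y Z : KlT B} (f : X ⟶ Y) (g : Y ⟶ Z) (x : X) :
    (f ≫ g) x = TM.bindT (f x) g := rfl

theorem bindT_none {X Y : Type} (g : X → TM B Y) :
    TM.bindT (TM.bot : TM B X) g = TM.bot := rfl

theorem bindT_some {X Y : Type} (w : List B) (x : X) (g : X → TM B Y) :
    TM.bindT (some (w, x) : Option (List B × X)) g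
      = Option.map (fun p => (w ++ p.1, p.2)) (g x : Option (List B × Y)) := rfl

theorem eqToHom_comp_apply {X Y Z : KlT B} (h : X = Y) (g : Y ⟶ Z) (x : X) :
    (CategoryTheory.eqToHom h ≫ g) x = g (cast h x) := by
  subst h
  show TM.bindT (TM.unit x) g = g x
  rcases hg : (g x : Option (List B × Z)) with _ | ⟨w, z⟩ <;>
    (simp [TM.bindT, TM.unit, TM.el, hg]; rfl)

theorem comp_eqToHom_apply {X Y Z : KlT B} (f : X ⟶ Y) (h : Y = Z) (x : X) :
    (f ≫ CategoryTheory.eqToHom h) x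
      = Option.map (fun p => (p.1, cast h p.2)) (f x : Option (List B × Y)) := by
  subst h
  show TM.bindT (f x) TM.unit = _
  rcases hf : (f x : Option (List B × Y)) with _ | ⟨w, y⟩ <;>
    (simp [TM.bindT, TM.unit, TM.el, hf]; rfl)

theorem ia_comp {X Y Z : IA A} (p : X ⟶ Y) (q : Y ⟶ Z) :
    p ≫ q = Quiver.Path.comp p q := rfl

theorem cons_eq_comp {V : Type} [Quiver V] {a b c : V} (p : Quiver.Path a b) (e : b ⟶ c) :
    p.cons e = p.comp (Quiver.Hom.toPath e) := by
  rw [Quiver.Hom.toPath, Quiver.Path.comp_cons, Quiver.Path.comp_nil]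

theorem pathCC_nil : pathCC ([] : List A) = Quiver.Path.nil := rfl

theorem pathCC_cons (a : A) (w : List A) :
    pathCC (a :: w)
      = Quiver.Path.comp (Quiver.Hom.toPath (WEdge.letter a)) (pathCC w) := rfl

theorem pathCC_snoc (w : List A) (a : A) :
    pathCC (w ++ [a]) = pathCC w ≫ IA.letter a := by
  induction w with
  | nil =>
      erw [List.nil_append, pathCC_cons, pathCC_nil, ia_comp, Quiver.Path.comp_nil]
  | cons b w ih =>
      erw [List.cons_append, pathCC_cons, pathCC_cons, ih, ia_comp, ia_comp,
        Quiver.Path.comp_assoc]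
      rfl

theorem toWord_cons_letter {X : WObj A} (p : Quiver.Path X WObj.center) (a : A) :
    toWord (p.cons (WEdge.letter a)) = toWord p ++ [a] := by rw [toWord]

theorem toWord_cons_tril {X : WObj A} (p : Quiver.Path X WObj.center) :
    toWord (p.cons WEdge.tril) = toWord p ++ [] := by simp [toWord]

theorem toWord_cons_tri {X : WObj A} (p : Quiver.Path X WObj.left) :
    toWord (p.cons WEdge.tri) = toWord p ++ [] := by simp [toWord]

theorem path_lc_decomp :
    ∀ (p : Quiver.Path (WObj.left : WObj A) WObj.center),
      p = (IA.tri A : (IA.l A) ⟶ (IA.c A)) ≫ pathCC (toWord p)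
  | Quiver.Path.cons q WEdge.tri => by
      rw [path_ll_nil q]
      rw [toWord_cons_tri, List.append_nil]
      show _ = Quiver.Path.comp _ _
      rw [show toWord (Quiver.Path.nil : Quiver.Path (WObj.left : WObj A) WObj.left) = []
          from by simp [toWord], pathCC_nil]
      erw [Quiver.Path.comp_nil]
      rfl
  | Quiver.Path.cons q (WEdge.letter a) => by
      have ih := path_lc_decomp q
      rw [toWord_cons_letter, pathCC_snoc, ← Category.assoc, ← ih]
      exact cons_eq_comp q (WEdge.letter a)

theorem path_lr_decomp :
    ∀ (p : Quiver.Path (WObj.left : WObj A) WObj.right),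
      p = pathLR (toWord p)
  | Quiver.Path.cons q WEdge.tril => by
      have ih := path_lc_decomp q
      rw [toWord_cons_tril, List.append_nil, pathLR, ← Category.assoc, ← ih]
      exact cons_eq_comp q WEdge.tril

theorem natOfPaths {V : Type} [Quiver V] {C : Type u} [Category.{v} C]
    {F G : Paths V ⥤ C} (app : ∀ X : Paths V, F.obj X ⟶ G.obj X)
    (h : ∀ {X Y : V} (e : X ⟶ Y),
      F.map (Quiver.Hom.toPath e) ≫ app Y = app X ≫ G.map (Quiver.Hom.toPath e)) :
    ∀ {X Y : Paths V} (p : X ⟶ Y), F.map p ≫ app Y = app X ≫ G.map p := by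
  intro X Y p
  change Quiver.Path (V := V) X Y at p
  induction p with
  | nil =>
      show F.map (𝟙 X) ≫ _ = _ ≫ G.map (𝟙 X)
      rw [F.map_id, G.map_id, Category.id_comp, Category.comp_id]
  | @cons Z W q e ih =>
      have hF : F.map (Quiver.Path.cons q e)
          = F.map (q : X ⟶ Z) ≫ F.map (Quiver.Hom.toPath e) :=
        F.map_comp q (Quiver.Hom.toPath e)
      have hG : G.map (Quiver.Path.cons q e)
          = G.map (q : X ⟶ Z) ≫ G.map (Quiver.Hom.toPath e) :=
        G.map_comp q (Quiver.Hom.toPath e)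
      erw [hF, hG, Category.assoc, h, ← Category.assoc, ih, Category.assoc]

end Lemmas2
section Lemmas3

variable {A B : Type}

/-- The behaviour of a state of a `Kl(T)`-automaton. -/
noncomputable def beh (N : IA A ⥤ KlT B) (q : N.obj (IA.c A)) :
    List A → Option (List B) :=
  fun u => Option.map Prod.fst ((N.map (pathCC u ≫ IA.tril A) q) : Option (List B × N.obj (IA.r A)))

/-- `(lcp F, red F)` as an element of `T(Irr A B)`, or `⊥` when `F = ⊥fun`. -/
noncomputable def behIrr (F : List A → Option (List B)) : TM B (Irr A B) :=
  if h : F = botfun A B then (TM.bot : TM B (Irr A B))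
  else (some (toIrr F h) : Option (List B × Irr A B))

theorem map_fst_bind_some {X Y : Type} (w : List B) (x : X) (g : X → TM B Y) :
    Option.map Prod.fst (TM.bindT (some (w, x) : Option (List B × X)) g)
      = (Option.map Prod.fst (g x : Option (List B × Y))).map (w ++ ·) := by
  rw [bindT_some]
  rcases (g x : Option (List B × Y)) with _ | ⟨v, y⟩ <;> rfl

/-- The key commutation lemma. -/
theorem behIrr_map (G : List A → Option (List B)) (w : List B) :
    behIrr (fun u => (G u).map (w ++ ·))
      = Option.map (fun p => (w ++ p.1, p.2)) (behIrr G : Option (List B × Irr A B)) := by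
  by_cases h : G = botfun A B
  · subst h
    have h2 : (fun u => (botfun A B u).map (w ++ ·)) = botfun A B := by
      funext u; rfl
    rw [behIrr, behIrr]
    erw [dif_pos rfl]
    rfl
  · have h2 : (fun u => (G u).map (w ++ ·)) ≠ botfun A B := mapped_ne_botfun h w
    rw [behIrr, behIrr]
    erw [dif_neg h, dif_neg h2]
    simp only [Option.map_some]
    rw [toIrr, toIrr]
    refine congrArg some (Prod.ext ?_ ?_)
    · exact lcp_map h w
    · exact Subtype.ext (red_map h w)

theorem recompose (F : List A → Option (List B)) (h : F ≠ botfun A B) (u : List A) :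
    Option.map (fun p => ((lcp F) ++ p.1, p.2))
        ((red F u).map (fun v => (v, PUnit.unit)) : Option (List B × PUnit))
      = (F u).map (fun v => (v, PUnit.unit)) := by
  rcases hF : F u with _ | v
  · simp [red, hF]
  · have hpre : lcp F <+: v := (lcp_spec h).1 u v hF
    obtain ⟨t, rfl⟩ := hpre
    simp [red, hF]

/-- Evaluating `𝒜_fin` on the path `w ◁ : center ⟶ right`. -/
theorem centerEval (L : List A → Option (List B)) (u : List A) (K : Irr A B) :
    (AfinKl A B L).map (pathCC u ≫ IA.tril A) K
      = ((K.1 u).map (fun v => (v, PUnit.unit)) : TM B PUnit) := by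
  induction u generalizing K with
  | nil =>
      rw [show pathCC ([] : List A) ≫ IA.tril A = IA.tril A from by
        erw [pathCC_nil, ia_comp, Quiver.Path.nil_comp]]
      rw [show (AfinKl A B L).map (IA.tril A) = (AfinKlPre A B L).map WEdge.tril from
        Paths.lift_toPath _ _]
      rfl
  | cons a u ih =>
      have hsplit : pathCC (a :: u) ≫ IA.tril A = IA.letter a ≫ (pathCC u ≫ IA.tril A) := by
        erw [pathCC_cons, ia_comp]
      erw [hsplit, Functor.map_comp, klComp_apply]
      rw [show (AfinKl A B L).map (IA.letter a) = (AfinKlPre A B L).map (WEdge.letter a) from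
        Paths.lift_toPath _ _]
      show TM.bindT (if h : (fun u => K.1 (a :: u)) = botfun A B then (TM.bot : TM B (Irr A B))
        else (some (toIrr _ h) : Option (List B × Irr A B))) _ = _
      by_cases h : (fun u => K.1 (a :: u)) = botfun A B
      · erw [dif_pos h, bindT_none]
        have : K.1 (a :: u) = none := congrFun h u
        rw [this]
        rfl
      · erw [dif_neg h, toIrr, bindT_some]
        have hred : (⟨red (fun u => K.1 (a :: u)), red_ne_botfun h, lcp_red h⟩ : Irr A B).1
            = red (fun u => K.1 (a :: u)) := rfl
        erw [ih]
        exact recompose (fun u => K.1 (a :: u)) h u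

theorem toWord_comp :
    ∀ {X Y Z : WObj A} (p : Quiver.Path X Y) (q : Quiver.Path Y Z),
      toWord (p.comp q) = toWord p ++ toWord q := by
  intro X Y Z p q
  induction q with
  | nil => rw [Quiver.Path.comp_nil, show toWord (Quiver.Path.nil : Quiver.Path Y Y) = []
      from by simp [toWord], List.append_nil]
  | cons q e ih =>
      rw [Quiver.Path.comp_cons]
      change WEdge _ _ at e
      cases e with
      | tri => rw [toWord_cons_tri, toWord_cons_tri, ih, List.append_assoc]
      | letter a => rw [toWord_cons_letter, toWord_cons_letter, ih, List.append_assoc]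
      | tril => rw [toWord_cons_tril, toWord_cons_tril, ih, List.append_assoc]

theorem toWord_pathCC (w : List A) : toWord (pathCC w : Quiver.Path _ _) = w := by
  induction w with
  | nil => rw [pathCC_nil]; exact (show toWord (Quiver.Path.nil : Quiver.Path (WObj.center : WObj A) WObj.center) = [] from by simp [toWord])
  | cons a w ih =>
      erw [pathCC_cons, toWord_comp, ih]
      show toWord ((Quiver.Path.nil : Quiver.Path (WObj.center : WObj A) _).cons
        (WEdge.letter a)) ++ w = a :: w
      rw [toWord_cons_letter]
      simp [toWord]

theorem toWord_pathLR (w : List A) : toWord (pathLR w : Quiver.Path _ _) = w := by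
  erw [pathLR, ia_comp, ia_comp, toWord_comp, toWord_comp]
  rw [show toWord (IA.tri A : Quiver.Path _ _) = [] from by
    erw [show (IA.tri A : Quiver.Path _ _) = Quiver.Path.nil.cons WEdge.tri from rfl,
      toWord_cons_tri]; exact (show toWord (Quiver.Path.nil : Quiver.Path (WObj.left : WObj A) WObj.left) ++ [] = [] from by simp [toWord])]
  rw [show toWord (IA.tril A : Quiver.Path _ _) = [] from by
    erw [show (IA.tril A : Quiver.Path _ _) = Quiver.Path.nil.cons WEdge.tril from rfl,
      toWord_cons_tril]; exact (show toWord (Quiver.Path.nil : Quiver.Path (WObj.center : WObj A) WObj.center) ++ [] = [] from by simp [toWord])]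
  rw [toWord_pathCC, List.nil_append, List.append_nil]

theorem afin_tri (L : List A → Option (List B)) :
    (AfinKl A B L).map (IA.tri A) = fun _ : PUnit => behIrr L :=
  Paths.lift_toPath _ _

theorem afin_pathLR (L : List A → Option (List B)) (w : List A) (x : PUnit) :
    (AfinKl A B L).map (pathLR w) x
      = ((L w).map (fun v => (v, PUnit.unit)) : TM B PUnit) := by
  erw [pathLR, Functor.map_comp, klComp_apply, afin_tri]
  by_cases h : L = botfun A B
  · erw [show behIrr L = TM.bot from dif_pos h, bindT_none]
    rw [show L w = none from congrFun h w]
    rfl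
  · erw [show behIrr L = some (toIrr L h) from dif_neg h, toIrr, bindT_some, centerEval]
    exact recompose L h w

/-- `𝒜_fin` accepts `L_Kl`. -/
theorem afin_accepts (L : List A → Option (List B)) :
    Accepts (AfinKl A B L) (LKl A B L) := by
  fapply CategoryTheory.Functor.ext
  · rintro ⟨(_ | _ | _), hX⟩
    · rfl
    · exact absurd rfl hX
    · rfl
  · rintro ⟨(_ | _ | _), hX⟩ ⟨(_ | _ | _), hY⟩ ⟨p⟩
    · have hp := path_ll_nil p
      subst hp
      show (AfinKl A B L).map (𝟙 (IA.l A)) = _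
      rw [CategoryTheory.Functor.map_id]
      show (𝟙 (CategoryTheory.KleisliCat.mk (TM B) PUnit)) = 𝟙 _ ≫ 𝟙 _ ≫ 𝟙 _
      rw [Category.id_comp, Category.id_comp]
    · exact absurd rfl hY
    · -- left to right
      have hp := path_lr_decomp p
      show (AfinKl A B L).map p = 𝟙 _ ≫ (LKl A B L).map ⟨p⟩ ≫ 𝟙 _
      rw [Category.id_comp, Category.comp_id]
      funext x
      exact (congrFun (congrArg (AfinKl A B L).map hp) x).trans (afin_pathLR L (toWord p) x)
    · exact absurd rfl hX
    · exact absurd rfl hX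
    · exact absurd rfl hX
    · exact (path_rl_false p).elim
    · exact absurd rfl hY
    · have hp := path_rr_nil p
      subst hp
      show (AfinKl A B L).map (𝟙 (IA.r A)) = _
      rw [CategoryTheory.Functor.map_id]
      show (𝟙 (CategoryTheory.KleisliCat.mk (TM B) PUnit)) = 𝟙 _ ≫ 𝟙 _ ≫ 𝟙 _
      rw [Category.id_comp, Category.id_comp]

end Lemmas3
section Lemmas4

variable {A B : Type}

theorem beh_nil (N : IA A ⥤ KlT B) (q : N.obj (IA.c A)) :
    beh N q [] = Option.map Prod.fst ((N.map (IA.tril A) q) : Option (List B × N.obj (IA.r A))) := by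
  simp only [beh]
  rw [show pathCC ([] : List A) ≫ IA.tril A = IA.tril A from by
    erw [pathCC_nil, ia_comp, Quiver.Path.nil_comp]]

theorem beh_cons (N : IA A ⥤ KlT B) (q : N.obj (IA.c A)) (a : A) (u : List A) :
    beh N q (a :: u) = Option.map Prod.fst
      ((TM.bindT (N.map (IA.letter a) q) (fun q' => N.map (pathCC u ≫ IA.tril A) q'))
        : Option (List B × N.obj (IA.r A))) := by
  simp only [beh]
  rw [show pathCC (a :: u) ≫ IA.tril A = IA.letter a ≫ (pathCC u ≫ IA.tril A) from by
    erw [pathCC_cons, ia_comp]]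
  rw [Functor.map_comp, klComp_apply]

theorem behIrr_red {G : List A → Option (List B)} (hG : G ≠ botfun A B) :
    behIrr (red G) = some (([] : List B), (toIrr G hG).2) := by
  rw [behIrr]; erw [dif_neg (red_ne_botfun hG), toIrr, toIrr]
  refine congrArg some (Prod.ext (lcp_red hG) (Subtype.ext ?_))
  exact red_eq_self_of_lcp_nil (lcp_red hG)

/-- The derivative square: applying `𝒜_fin`'s letter map after `behIrr`. -/
theorem behIrr_deriv (a : A) (F : List A → Option (List B)) :
    TM.bindT (behIrr F) (fun K : Irr A B => behIrr (fun u => K.1 (a :: u)))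
      = behIrr (fun u => F (a :: u)) := by
  by_cases h : F = botfun A B
  · rw [show behIrr F = TM.bot from dif_pos h, bindT_none]
    have hbot : (fun u => F (a :: u)) = botfun A B := by
      funext u
      rw [congrFun h (a :: u)]
      rfl
    rw [behIrr]; erw [dif_pos hbot]
  · erw [show behIrr F = some (toIrr F h) from dif_neg h, toIrr, bindT_some]
    by_cases h2 : (fun u => F (a :: u)) = botfun A B
    · have h3 : (fun u => (⟨red F, red_ne_botfun h, lcp_red h⟩ : Irr A B).1 (a :: u))
          = botfun A B := by
        funext u
        have hu : F (a :: u) = none := congrFun h2 u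
        simp [red, hu, botfun]
      rw [show behIrr (fun u => (⟨red F, red_ne_botfun h, lcp_red h⟩ : Irr A B).1 (a :: u))
        = TM.bot from dif_pos h3]
      rw [behIrr]; erw [dif_pos h2]
      rfl
    · -- main case
      set G : List A → Option (List B) := fun u => F (a :: u) with hGdef
      have hG : G ≠ botfun A B := h2
      -- lcp F is a prefix of lcp G
      have hcomm : IsCommonPrefix (lcp F) G := by
        intro u v huv
        exact (lcp_spec h).1 (a :: u) v huv
      have hpre : lcp F <+: lcp G := by
        obtain ⟨u0, v0, hv0⟩ := exists_ne_none_of_ne_botfun hG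
        have h4 : lcp F <+: v0 := hcomm u0 v0 hv0
        have h5 : lcp G <+: v0 := (lcp_spec hG).1 u0 v0 hv0
        rcases List.prefix_or_prefix_of_prefix h4 h5 with hq | hq
        · exact hq
        · have hlen : (lcp F).length ≤ (lcp G).length := (lcp_spec hG).2 _ hcomm
          rw [hq.eq_of_length (le_antisymm hq.length_le hlen)]
      set r : List B := (lcp G).drop (lcp F).length with hrdef
      have hr : lcp F ++ r = lcp G := List.prefix_iff_eq_append.mp hpre
      have hshift : (fun u => (⟨red F, red_ne_botfun h, lcp_red h⟩ : Irr A B).1 (a :: u))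
          = fun u => (red G u).map (r ++ ·) := by
        funext u
        show red F (a :: u) = (red G u).map (r ++ ·)
        rcases hGu : G u with _ | v
        · have : F (a :: u) = none := hGu
          simp [red, this, hGu]
        · have hFu : F (a :: u) = some v := hGu
          have hpv : lcp G <+: v := (lcp_spec hG).1 u v hGu
          obtain ⟨s, rfl⟩ := hpv
          simp only [red, hFu, hGu, Option.map_some]
          congr 1
          rw [← hr, List.append_assoc, List.drop_left, ← List.append_assoc, List.drop_left]
      rw [hshift, behIrr_map, behIrr_red hG]
      rw [show behIrr G = some (toIrr G hG) from dif_neg hG, toIrr]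
      simp only [Option.map_some]
      refine congrArg some (Prod.ext ?_ rfl)
      show lcp F ++ (r ++ []) = lcp G
      rw [List.append_nil, hr]

theorem accepts_obj_l {N : IA A ⥤ KlT B} {L : List A → Option (List B)}
    (hN : Accepts N (LKl A B L)) :
    N.obj (IA.l A) = CategoryTheory.KleisliCat.mk (TM B) PUnit :=
  Functor.congr_obj hN (OA.l A)

theorem accepts_obj_r {N : IA A ⥤ KlT B} {L : List A → Option (List B)}
    (hN : Accepts N (LKl A B L)) :
    N.obj (IA.r A) = CategoryTheory.KleisliCat.mk (TM B) PUnit :=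
  Functor.congr_obj hN (OA.r A)

theorem accepts_beh {N : IA A ⥤ KlT B} {L : List A → Option (List B)}
    (hN : Accepts N (LKl A B L)) (x : N.obj (IA.l A)) (w : List A) :
    Option.map Prod.fst ((N.map (pathLR w) x) : Option (List B × N.obj (IA.r A))) = L w := by
  have h1 := Functor.congr_hom hN (OA.word w)
  have h2 : N.map (pathLR w) = CategoryTheory.eqToHom (accepts_obj_l hN)
      ≫ ((LKl A B L).map (OA.word w)) ≫ CategoryTheory.eqToHom (accepts_obj_r hN).symm := h1
  erw [h2, eqToHom_comp_apply, comp_eqToHom_apply]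
  erw [show (LKl A B L).map (OA.word w) (cast (accepts_obj_l hN) x)
    = ((L (toWord (pathLR w))).map (fun v => (v, PUnit.unit)) : TM B PUnit) from rfl]
  rw [toWord_pathLR]
  rcases L w with _ | v <;> rfl

theorem accepts_tri {N : IA A ⥤ KlT B} {L : List A → Option (List B)}
    (hN : Accepts N (LKl A B L)) (x : N.obj (IA.l A)) (w : List A) :
    Option.map Prod.fst ((TM.bindT (N.map (IA.tri A) x)
        (fun q => N.map (pathCC w ≫ IA.tril A) q)) : Option (List B × N.obj (IA.r A)))
      = L w := by
  have hsplit : N.map (pathLR w) = N.map (IA.tri A) ≫ N.map (pathCC w ≫ IA.tril A) := by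
    rw [pathLR]
    exact N.map_comp _ _
  rw [← accepts_beh hN x w, hsplit, klComp_apply]

/-- The canonical natural transformation into `𝒜_fin`. -/
noncomputable def alphaApp (L : List A → Option (List B)) (N : IA A ⥤ KlT B)
    (hl : N.obj (IA.l A) = CategoryTheory.KleisliCat.mk (TM B) PUnit)
    (hr : N.obj (IA.r A) = CategoryTheory.KleisliCat.mk (TM B) PUnit) :
    ∀ X : IA A, (N.obj X ⟶ (AfinKl A B L).obj X) := fun X =>
  match X with
  | WObj.left => CategoryTheory.eqToHom hl
  | WObj.center => fun q => behIrr (beh N q)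
  | WObj.right => CategoryTheory.eqToHom hr

theorem alpha_natural (L : List A → Option (List B)) (N : IA A ⥤ KlT B)
    (hN : Accepts N (LKl A B L)) {X Y : IA A} (p : X ⟶ Y) :
    N.map p ≫ alphaApp L N (accepts_obj_l hN) (accepts_obj_r hN) Y
      = alphaApp L N (accepts_obj_l hN) (accepts_obj_r hN) X ≫ (AfinKl A B L).map p := by
  refine natOfPaths (F := N) (G := AfinKl A B L) _ ?_ p
  intro X Y e
  rw [show (AfinKl A B L).map (Quiver.Hom.toPath e) = (AfinKlPre A B L).map e from
    Paths.lift_toPath _ _]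
  change WEdge _ _ at e
  cases e with
  | tri =>
      funext z
      erw [klComp_apply,
        show alphaApp L N (accepts_obj_l hN) (accepts_obj_r hN) WObj.left
          = CategoryTheory.eqToHom (accepts_obj_l hN) from rfl,
        show alphaApp L N (accepts_obj_l hN) (accepts_obj_r hN) WObj.center
          = fun q => behIrr (beh N q) from rfl,
        eqToHom_comp_apply]
      show TM.bindT (N.map (IA.tri A) z) (fun q => behIrr (beh N q)) = behIrr L
      rcases ht : N.map (IA.tri A) z with _ | ⟨w, q'⟩
      · have hL : L = botfun A B := by
          funext u
          rw [← accepts_tri hN z u, ht]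
          rfl
        rw [show TM.bindT (none : Option (List B × N.obj (IA.c A)))
          (fun q => behIrr (beh N q)) = TM.bot from rfl]
        rw [behIrr]; erw [dif_pos hL]
      · have hL : L = fun u => (beh N q' u).map (w ++ ·) := by
          funext u
          erw [← accepts_tri hN z u, ht, map_fst_bind_some]
          rfl
        erw [bindT_some, hL, behIrr_map]
  | letter a =>
      funext q
      erw [klComp_apply, klComp_apply,
        show alphaApp L N (accepts_obj_l hN) (accepts_obj_r hN) WObj.center
          = fun q => behIrr (beh N q) from rfl]
      show TM.bindT (N.map (IA.letter a) q) (fun q' => behIrr (beh N q'))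
        = TM.bindT (behIrr (beh N q)) (fun K : Irr A B => behIrr (fun u => K.1 (a :: u)))
      rw [behIrr_deriv]
      rcases ht : N.map (IA.letter a) q with _ | ⟨w, q'⟩
      · have hder : (fun u => beh N q (a :: u)) = botfun A B := by
          funext u
          erw [beh_cons, ht]
          rfl
        rw [show TM.bindT (none : Option (List B × N.obj (IA.c A)))
          (fun q' => behIrr (beh N q')) = TM.bot from rfl, hder]
        rw [behIrr]; erw [dif_pos rfl]
      · have hshift : (fun u => beh N q (a :: u)) = fun u => (beh N q' u).map (w ++ ·) := by
          funext u
          erw [beh_cons, ht, map_fst_bind_some]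
          rfl
        erw [bindT_some, show (fun u => beh N q (a :: u)) = fun u => (beh N q' u).map (w ++ ·)
          from hshift, behIrr_map]
  | tril =>
      funext q
      rw [show alphaApp L N (accepts_obj_l hN) (accepts_obj_r hN) WObj.right
          = CategoryTheory.eqToHom (accepts_obj_r hN) from rfl,
        show alphaApp L N (accepts_obj_l hN) (accepts_obj_r hN) WObj.center
          = fun q => behIrr (beh N q) from rfl]
      erw [comp_eqToHom_apply, klComp_apply]
      show Option.map (fun p => (p.1, cast (accepts_obj_r hN) p.2))
          ((N.map (IA.tril A) q) : Option (List B × N.obj (IA.r A)))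
        = TM.bindT (behIrr (beh N q)) (fun K : Irr A B =>
            ((K.1 []).map (fun v => (v, PUnit.unit)) : TM B PUnit))
      have hlhs : Option.map (fun p => (p.1, cast (accepts_obj_r hN) p.2))
          ((N.map (IA.tril A) q) : Option (List B × N.obj (IA.r A)))
          = (beh N q []).map (fun v => (v, PUnit.unit)) := by
        erw [beh_nil]
        rcases (N.map (IA.tril A) q) with _ | ⟨v, y⟩
        · rfl
        · simp only [Option.map_some]
          have hy : (cast (accepts_obj_r hN) y : PUnit) = PUnit.unit :=
            Subsingleton.elim _ _
          erw [hy]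
          rfl
      rw [hlhs]
      by_cases hb : beh N q = botfun A B
      · erw [show behIrr (beh N q) = TM.bot from dif_pos hb, bindT_none,
          congrFun hb ([] : List A)]
        rfl
      · erw [show behIrr (beh N q) = some (toIrr (beh N q) hb) from dif_neg hb, toIrr, bindT_some]
        exact (recompose (beh N q) hb []).symm

end Lemmas4
section Final

variable {A B : Type}

/-- The canonical morphism of automata into `𝒜_fin`. -/
noncomputable def alphaNat (L : List A → Option (List B)) (N : IA A ⥤ KlT B)
    (hN : Accepts N (LKl A B L)) : N ⟶ AfinKl A B L where
  app := alphaApp L N (accepts_obj_l hN) (accepts_obj_r hN)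
  naturality _ _ p := alpha_natural L N hN p

theorem Auto.prop {L : OA A ⥤ KlT B} {M N : Auto A L} (α : M ⟶ N) :
    CategoryTheory.Functor.whiskerLeft (OA.inc A) (Auto.nat α) = eqToHom (M.2.trans N.2.symm) :=
  (show { β : M.1 ⟶ N.1 //
      CategoryTheory.Functor.whiskerLeft (OA.inc A) β = eqToHom (M.2.trans N.2.symm) } from α).2

/-- The canonical morphism in `Auto(L_Kl)`. -/
noncomputable def mkHom (L : List A → Option (List B)) (M : Auto A (LKl A B L)) :
    M ⟶ Auto.mk (AfinKl A B L) (afin_accepts L) := by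
  refine ⟨alphaNat L M.1 M.2, ?_⟩
  apply NatTrans.ext
  funext X
  rcases X with ⟨(_ | _ | _), hX⟩
  · show alphaApp L M.1 (accepts_obj_l M.2) (accepts_obj_r M.2) (IA.l A) = _
    erw [eqToHom_app]
    rfl
  · exact absurd rfl hX
  · show alphaApp L M.1 (accepts_obj_l M.2) (accepts_obj_r M.2) (IA.r A) = _
    erw [eqToHom_app]
    rfl

theorem mkHom_uniq (L : List A → Option (List B)) (M : Auto A (LKl A B L))
    (m : M ⟶ Auto.mk (AfinKl A B L) (afin_accepts L)) : m = mkHom L M := by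
  have hprop := Auto.prop m
  have hml : (Auto.nat m).app (IA.l A) = CategoryTheory.eqToHom (accepts_obj_l M.2) := by
    have h1 := NatTrans.congr_app hprop (OA.l A)
    rw [eqToHom_app] at h1
    exact h1
  have hmr : (Auto.nat m).app (IA.r A) = CategoryTheory.eqToHom (accepts_obj_r M.2) := by
    have h1 := NatTrans.congr_app hprop (OA.r A)
    rw [eqToHom_app] at h1
    exact h1
  refine Subtype.ext ?_
  show Auto.nat m = alphaNat L M.1 M.2
  apply NatTrans.ext
  funext X
  rcases X with (_ | _ | _)
  · show (Auto.nat m).app (IA.l A) = _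
    rw [hml]
    rfl
  · -- center
    funext q
    have key : ∀ u : List A, beh M.1 q u
        = Option.map Prod.fst ((TM.bindT ((Auto.nat m).app (IA.c A) q)
          (fun K : Irr A B => ((K.1 u).map (fun v => (v, PUnit.unit)) : TM B PUnit)))
            : Option (List B × PUnit)) := by
      intro u
      have hnat := (Auto.nat m).naturality (pathCC u ≫ IA.tril A)
      rw [hmr] at hnat
      have h2 := congrFun hnat q
      erw [comp_eqToHom_apply, klComp_apply] at h2
      rw [show (Auto.mk (AfinKl A B L) (afin_accepts L)).1.map (pathCC u ≫ IA.tril A)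
        = fun K : Irr A B => ((K.1 u).map (fun v => (v, PUnit.unit)) : TM B PUnit)
        from funext (centerEval L u)] at h2
      erw [← h2]
      simp only [beh]
      rcases (M.1.map (pathCC u ≫ IA.tril A) q : Option (List B × M.1.obj (IA.r A))) with
        _ | ⟨v, y⟩ <;> rfl
    show (Auto.nat m).app (IA.c A) q = behIrr (beh M.1 q)
    rcases hm : ((Auto.nat m).app (IA.c A) q : Option (List B × Irr A B)) with _ | ⟨w, K⟩
    · have hbot : beh M.1 q = botfun A B := by
        funext u
        rw [key u, hm]
        rfl
      rw [hbot, behIrr]; erw [dif_pos rfl]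
      rfl
    · have hbeh : beh M.1 q = fun u => (K.1 u).map (w ++ ·) := by
        funext u
        erw [key u, hm, map_fst_bind_some]
        rcases (K.1 u) with _ | v <;> rfl
      rw [hbeh, behIrr_map]
      rw [show behIrr K.1 = some (toIrr K.1 K.2.1) from dif_neg K.2.1, toIrr]
      simp only [Option.map_some]
      refine congrArg some (Prod.ext ?_ ?_)
      · show w = w ++ lcp K.1
        rw [K.2.2, List.append_nil]
      · show K = (⟨red K.1, red_ne_botfun K.2.1, lcp_red K.2.1⟩ : Irr A B)
        exact (Subtype.ext (red_eq_self_of_lcp_nil K.2.2)).symm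
  · show (Auto.nat m).app (IA.r A) = _
    rw [hmr]
    rfl

end Final
/-- The automaton `𝒜_fin` accepts `L_Kl` and is a final object of `Auto(L_Kl)`. -/
theorem AfinKl_accepts_and_final (A B : Type) (L : List A → Option (List B)) :
    ∃ h : Accepts (AfinKl A B L) (LKl A B L),
      Nonempty (IsTerminal (Auto.mk (AfinKl A B L) h)) := by
  refine ⟨afin_accepts L, ⟨IsTerminal.ofUniqueHom (fun M => mkHom L M)
    (fun M m => mkHom_uniq L M m)⟩⟩
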